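/- Consider dual dynamics λ̇₁ = [Ax(t) − g]⁺_{λ₁}, λ̇₂ = Cx(t) − h along a trajectory x(t) that remains in a box S2 disjoint from the polyhedron S1 = {x : Ax ≤ g, Cx = h}. Then there exists a vector z and ε > 0 such that z^T λ(t) ≥ z^T λ(0) + εt for all t ≥ 0, and hence limsup_{t→∞} |λ_i(t)| = ∞ for some coordinate i. -/

import Mathlib

/-! Since the box misses the polyhedron, Farkas' lemma yields `z = (z₁, z₂)` with `z₁ ≥ 0` and
`z₁ᵀ(Av - g) + z₂ᵀ(Cv - h) ≥ ε > 0` on the whole box. As `[y]⁺_a ≥ y` and `z₁ ≥ 0`, the derivative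
of `zᵀλ(t)` is then at least `ε` along the trajectory, so `zᵀλ` grows linearly and some coordinate
of `λ` cannot stay bounded. -/

open Matrix

section DotProductRepresentation

variable {R m k : Type*} [CommSemiring R] [Fintype m] [Fintype k] [DecidableEq m] [DecidableEq k]

lemma LinearMap.apply_eq_dotProduct (f : (m → R) →ₗ[R] R) (a : m → R) :
    f a = (fun i => f (Pi.single i 1)) ⬝ᵥ a := by
  conv_lhs => rw [← (dotProductEquiv R m).apply_symm_apply f]
  rfl

lemma LinearMap.prod_apply_eq_dotProduct (f : (m → R) × (k → R) →ₗ[R] R) (a : m → R) (b : k → R) :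
    f (a, b) = (fun i => f (Pi.single i 1, 0)) ⬝ᵥ a + (fun j => f (0, Pi.single j 1)) ⬝ᵥ b := by
  conv_lhs => rw [← f.coprod_comp_inl_inr, coprod_apply, (f ∘ₗ inl R _ _).apply_eq_dotProduct,
    (f ∘ₗ inr R _ _).apply_eq_dotProduct]
  rfl

end DotProductRepresentation

/-- Farkas' lemma for the cone `ℝ≥0ᵐ × {0}` and the compact convex set
`{(g - A v, h - C v) | v ∈ K}`; compactness turns the strict inequality into a margin `ε`. -/
theorem Matrix.exists_certificate_of_disjoint {m n k : Type*} [Fintype m] [Fintype n] [Fintype k]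
    [DecidableEq m] [DecidableEq k] (A : Matrix m n ℝ) (C : Matrix k n ℝ) (g : m → ℝ) (h : k → ℝ)
    {K : Set (n → ℝ)} (hKconv : Convex ℝ K) (hKcomp : IsCompact K)
    (hdisj : Disjoint {x | A *ᵥ x ≤ g ∧ C *ᵥ x = h} K) :
    ∃ (z₁ : m → ℝ) (z₂ : k → ℝ) (ε : ℝ), 0 < ε ∧ 0 ≤ z₁ ∧
      ∀ v ∈ K, ε ≤ z₁ ⬝ᵥ (A *ᵥ v - g) + z₂ ⬝ᵥ (C *ᵥ v - h) := by
  let G : (n → ℝ) →ᵃ[ℝ] (m → ℝ) × (k → ℝ) :=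
    AffineMap.const ℝ (n → ℝ) (g, h) - (A.mulVecLin.prod C.mulVecLin).toAffineMap
  let P : ProperCone ℝ ((m → ℝ) × (k → ℝ)) :=
    (ProperCone.positive ℝ (m → ℝ)).comap (ContinuousLinearMap.fst ℝ _ _) ⊓
      (⊥ : ProperCone ℝ (k → ℝ)).comap (ContinuousLinearMap.snd ℝ _ _)
  have hGK : IsCompact (G '' K) := hKcomp.image G.continuous_of_finiteDimensional
  have hGP : Disjoint (G '' K) P := by
    refine Set.disjoint_left.2 ?_
    rintro _ ⟨v, hv, rfl⟩ ⟨hA, hC⟩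
    exact Set.disjoint_left.1 hdisj ⟨sub_nonneg.1 hA, (sub_eq_zero.1 hC).symm⟩ hv
  obtain ⟨f, hfP, hfK⟩ := P.hyperplane_separation (hKconv.affine_image G) hGK hGP
  obtain ⟨ε, hε, hεK⟩ := hGK.exists_forall_le' (f := fun y => -f y) (a := 0)
    (by fun_prop) fun y hy => neg_pos.2 (hfK y hy)
  refine ⟨fun i => f (Pi.single i 1, 0), fun j => f (0, Pi.single j 1), ε, hε,
    fun i => hfP _ ⟨Pi.single_nonneg.2 zero_le_one, rfl⟩, fun v hv => ?_⟩
  have hεv := hεK (G v) ⟨v, hv, rfl⟩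
  rwa [show G v = (g - A *ᵥ v, h - C *ᵥ v) from rfl, ← f.coe_coe,
    LinearMap.prod_apply_eq_dotProduct, neg_add, ← dotProduct_neg, ← dotProduct_neg, neg_sub,
    neg_sub] at hεv

/-- The projection `[y]⁺_a` of the dual dynamics. -/
def projPos {ι α : Type*} [Zero α] [LinearOrder α] (y a : ι → α) : ι → α :=
  fun i => if 0 < y i ∨ 0 < a i then y i else 0

lemma le_projPos {ι α : Type*} [Zero α] [LinearOrder α] (y a : ι → α) : y ≤ projPos y a := by
  intro i
  unfold projPos
  split_ifs with hi
  · exact le_rfl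
  · exact not_lt.1 (not_or.1 hi).1

lemma HasDerivAt.const_dotProduct {ι : Type*} [Fintype ι] {u : ℝ → ι → ℝ} {u' : ι → ℝ} {t : ℝ}
    (z : ι → ℝ) (hu : HasDerivAt u u' t) : HasDerivAt (fun s => z ⬝ᵥ u s) (z ⬝ᵥ u') t :=
  HasDerivAt.fun_sum fun i _ => (hasDerivAt_pi.1 hu i).const_mul (z i)

lemma mul_sub_le_image_sub_of_le_hasDerivAt_Ici {f f' : ℝ → ℝ} {a ε : ℝ}
    (hf : ∀ t, a ≤ t → HasDerivAt f (f' t) t) (hf' : ∀ t, a ≤ t → ε ≤ f' t) {t : ℝ}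
    (ht : a ≤ t) : ε * (t - a) ≤ f t - f a := by
  have hint : ∀ s ∈ interior (Set.Ici a), a ≤ s := fun _ hs => interior_subset hs
  exact (convex_Ici a).mul_sub_le_image_sub_of_le_deriv
    (fun s hs => (hf s hs).continuousAt.continuousWithinAt)
    (fun s hs => (hf s (hint s hs)).differentiableAt.differentiableWithinAt)
    (fun s hs => (hf s (hint s hs)).deriv ▸ hf' s (hint s hs)) a Set.self_mem_Ici t ht ht

lemma forall_exists_le_of_add_mul_le {f : ℝ → ℝ} {c ε : ℝ} (hε : 0 < ε)
    (hf : ∀ t, 0 ≤ t → c + ε * t ≤ f t) (M : ℝ) : ∃ t ∈ Set.Ici 0, M ≤ f t := by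
  have ht : 0 ≤ |M - c| / ε := by positivity
  refine ⟨_, ht, ?_⟩
  have hMt := hf _ ht
  rw [mul_div_cancel₀ _ hε.ne'] at hMt
  linarith [le_abs_self (M - c)]

lemma exists_forall_exists_le_abs_apply {α ι : Type*} [Fintype ι] {s : Set α} {u : α → ι → ℝ}
    (z : ι → ℝ) (h : ∀ M, ∃ a ∈ s, M ≤ z ⬝ᵥ u a) : ∃ i, ∀ M, ∃ a ∈ s, M ≤ |u a i| := by
  by_contra! hbdd
  choose B hB using hbdd
  obtain ⟨a, ha, hle⟩ := h (∑ i, |z i| * B i + 1)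
  have hbound : z ⬝ᵥ u a ≤ ∑ i, |z i| * B i := Finset.sum_le_sum fun i _ =>
    calc z i * u a i ≤ |z i| * |u a i| := abs_mul (z i) (u a i) ▸ le_abs_self _
      _ ≤ |z i| * B i := mul_le_mul_of_nonneg_left (hB i a ha).le (abs_nonneg _)
  linarith

theorem stmt11_general {n p q : ℕ}
    (A : Matrix (Fin p) (Fin n) ℝ) (C : Matrix (Fin q) (Fin n) ℝ)
    (g : Fin p → ℝ) (h : Fin q → ℝ) (dlo dhi : Fin n → ℝ)
    (hdisj : {x : Fin n → ℝ | A.mulVec x ≤ g ∧ C.mulVec x = h} ∩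
             {x : Fin n → ℝ | dlo ≤ x ∧ x ≤ dhi} = ∅)
    (x : ℝ → Fin n → ℝ) (lam₁ : ℝ → Fin p → ℝ) (lam₂ : ℝ → Fin q → ℝ)
    (hx : ∀ t : ℝ, 0 ≤ t → dlo ≤ x t ∧ x t ≤ dhi)
    (hd₁ : ∀ t : ℝ, 0 ≤ t → ∀ i : Fin p,
      HasDerivAt (fun s => lam₁ s i)
        (if 0 < (A.mulVec (x t) - g) i ∨ 0 < lam₁ t i then (A.mulVec (x t) - g) i else 0) t)
    (hd₂ : ∀ t : ℝ, 0 ≤ t → ∀ i : Fin q,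
      HasDerivAt (fun s => lam₂ s i) ((C.mulVec (x t) - h) i) t) :
    (∃ (z₁ : Fin p → ℝ) (z₂ : Fin q → ℝ) (ε : ℝ), 0 < ε ∧
      ∀ t : ℝ, 0 ≤ t → z₁ ⬝ᵥ lam₁ 0 + z₂ ⬝ᵥ lam₂ 0 + ε * t ≤ z₁ ⬝ᵥ lam₁ t + z₂ ⬝ᵥ lam₂ t) ∧
    ((∃ i : Fin p, ∀ Mb : ℝ, ∃ t : ℝ, 0 ≤ t ∧ Mb ≤ |lam₁ t i|) ∨
     (∃ i : Fin q, ∀ Mb : ℝ, ∃ t : ℝ, 0 ≤ t ∧ Mb ≤ |lam₂ t i|)) := by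
  obtain ⟨z₁, z₂, ε, hε, hz₁, hcert⟩ := A.exists_certificate_of_disjoint C g h
    (convex_Icc dlo dhi) isCompact_Icc (Set.disjoint_iff_inter_eq_empty.2 hdisj)
  set V : ℝ → ℝ := fun t => z₁ ⬝ᵥ lam₁ t + z₂ ⬝ᵥ lam₂ t
  have hV : ∀ t, 0 ≤ t →
      HasDerivAt V (z₁ ⬝ᵥ projPos (A *ᵥ x t - g) (lam₁ t) + z₂ ⬝ᵥ (C *ᵥ x t - h)) t :=
    fun t ht => ((hasDerivAt_pi.2 (hd₁ t ht)).const_dotProduct z₁).add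
      ((hasDerivAt_pi.2 (hd₂ t ht)).const_dotProduct z₂)
  have hV' : ∀ t, 0 ≤ t → ε ≤ z₁ ⬝ᵥ projPos (A *ᵥ x t - g) (lam₁ t) + z₂ ⬝ᵥ (C *ᵥ x t - h) :=
    fun t ht => (hcert (x t) (hx t ht)).trans <|
      add_le_add (dotProduct_le_dotProduct_of_nonneg_left (le_projPos _ _) hz₁) le_rfl
  have hgrowth : ∀ t, 0 ≤ t → V 0 + ε * t ≤ V t := fun t ht => by
    linarith [sub_zero t ▸ mul_sub_le_image_sub_of_le_hasDerivAt_Ici hV hV' ht]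
  refine ⟨⟨z₁, z₂, ε, hε, hgrowth⟩, ?_⟩
  obtain ⟨i | i, hi⟩ := exists_forall_exists_le_abs_apply (u := fun t => Sum.elim (lam₁ t) (lam₂ t))
    (Sum.elim z₁ z₂) <| forall_exists_le_of_add_mul_le hε fun t ht => by
      simpa only [sumElim_dotProduct_sumElim] using hgrowth t ht
  exacts [Or.inl ⟨i, hi⟩, Or.inr ⟨i, hi⟩]

/-- Divergence of the dual variables of the projected primal-dual dynamics when the UC
optimization is infeasible: if the trajectory `x(t)` stays in a box `S₂` disjoint from
the polyhedron `S₁ = {x : Ax ≤ g, Cx = h}`, and `λ = (λ₁, λ₂)` obeys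
`λ̇₁ = [Ax(t) − g]⁺_{λ₁}`, `λ̇₂ = Cx(t) − h`, then there is a direction `z` and `ε > 0`
with `zᵀλ(t) ≥ zᵀλ(0) + εt` for all `t ≥ 0`, and hence some coordinate of `λ` has
`limsup_{t→∞} |λᵢ(t)| = ∞`. -/
theorem stmt11 {n p q : ℕ}
    (A : Matrix (Fin p) (Fin n) ℝ) (C : Matrix (Fin q) (Fin n) ℝ)
    (g : Fin p → ℝ) (h : Fin q → ℝ) (dlo dhi : Fin n → ℝ) (hbox : dlo ≤ dhi)
    (hdisj : {x : Fin n → ℝ | A.mulVec x ≤ g ∧ C.mulVec x = h} ∩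
             {x : Fin n → ℝ | dlo ≤ x ∧ x ≤ dhi} = ∅)
    (x : ℝ → Fin n → ℝ) (lam₁ : ℝ → Fin p → ℝ) (lam₂ : ℝ → Fin q → ℝ)
    (hx : ∀ t : ℝ, 0 ≤ t → dlo ≤ x t ∧ x t ≤ dhi)
    (hpos : ∀ t : ℝ, 0 ≤ t → 0 ≤ lam₁ t)
    (hd₁ : ∀ t : ℝ, 0 ≤ t → ∀ i : Fin p,
      HasDerivAt (fun s => lam₁ s i)
        (if 0 < (A.mulVec (x t) - g) i ∨ 0 < lam₁ t i then (A.mulVec (x t) - g) i else 0) t)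
    (hd₂ : ∀ t : ℝ, 0 ≤ t → ∀ i : Fin q,
      HasDerivAt (fun s => lam₂ s i) ((C.mulVec (x t) - h) i) t) :
    (∃ (z₁ : Fin p → ℝ) (z₂ : Fin q → ℝ) (ε : ℝ), 0 < ε ∧
      ∀ t : ℝ, 0 ≤ t → z₁ ⬝ᵥ lam₁ 0 + z₂ ⬝ᵥ lam₂ 0 + ε * t ≤ z₁ ⬝ᵥ lam₁ t + z₂ ⬝ᵥ lam₂ t) ∧
    ((∃ i : Fin p, ∀ Mb : ℝ, ∃ t : ℝ, 0 ≤ t ∧ Mb ≤ |lam₁ t i|) ∨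
     (∃ i : Fin q, ∀ Mb : ℝ, ∃ t : ℝ, 0 ≤ t ∧ Mb ≤ |lam₂ t i|)) :=
  stmt11_general A C g h dlo dhi hdisj x lam₁ lam₂ hx hd₁ hd₂
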